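/- A nonzero metabelian Lie algebra A has linear-torsion free commutant A² if and only if A is abelian or A is a strict semidomain. -/

import Mathlib

/-- The (two-sided Lie) ideal of `A` generated by the single element `x`. -/
def lieIdealGen (k : Type*) [CommRing k] {A : Type*} [LieRing A] [LieAlgebra k A] (x : A) :
    LieIdeal k A :=
  LieSubmodule.lieSpan k A {x}

/-- Nonzero `x` and `y` form a pair of zero divisors: `⟨x⟩ ∘ ⟨y⟩ = 0`. -/
def IsZeroDivPair (k : Type*) [CommRing k] {A : Type*} [LieRing A] [LieAlgebra k A]
    (x y : A) : Prop :=
  x ≠ 0 ∧ y ≠ 0 ∧ ∀ a ∈ lieIdealGen k x, ∀ b ∈ lieIdealGen k y, ⁅a, b⁆ = 0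

/-- `x` is a zero divisor. -/
def IsLieZeroDivisor (k : Type*) [CommRing k] {A : Type*} [LieRing A] [LieAlgebra k A]
    (x : A) : Prop :=
  ∃ y, IsZeroDivPair k x y

/-- `D(A)`: all zero divisors of `A` together with `0`. -/
def DSet (k : Type*) [CommRing k] (A : Type*) [LieRing A] [LieAlgebra k A] : Set A :=
  {x | x = 0 ∨ IsLieZeroDivisor k x}

/-- The Fitting radical: elements whose generated ideal is a nilpotent Lie algebra. -/
def FitSet (k : Type*) [CommRing k] (A : Type*) [LieRing A] [LieAlgebra k A] : Set A :=
  {x | LieRing.IsNilpotent (lieIdealGen k x)}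

/-- The commutant (derived ideal) `A²`. -/
def commutant (k : Type*) [CommRing k] (A : Type*) [LieRing A] [LieAlgebra k A] : LieIdeal k A :=
  ⁅(⊤ : LieIdeal k A), (⊤ : LieIdeal k A)⁆

/-- A Lie ring is metabelian if `(a∘b)∘(c∘d) = 0` identically. -/
def IsMetabelianLie (A : Type*) [LieRing A] : Prop :=
  ∀ a b c d : A, ⁅⁅a, b⁆, ⁅c, d⁆⁆ = 0

/-- The commutant `A²` is linear-torsion free: nonzero `x ∈ A²` times `y ∉ A²` is nonzero. -/
def LTFree (k : Type*) [CommRing k] (A : Type*) [LieRing A] [LieAlgebra k A] : Prop :=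
  ∀ x ∈ commutant k A, x ≠ 0 → ∀ y ∉ commutant k A, ⁅x, y⁆ ≠ 0

/-! In a metabelian Lie algebra the commutant `A²` is an abelian ideal, so every nonzero element
of `A²` is a zero divisor (paired with itself); hence `A² ⊆ D(A)` always. Conversely:

* if `A²` is linear-torsion free and `A` is not abelian, pick `⁅a, b⁆ ≠ 0`. A zero divisor `x`
  outside `A²`, paired with `y`, is impossible: if `y ∈ A²` then `⁅y, x⁆ = 0` contradicts
  torsion-freeness directly, and if `y ∉ A²` then `⁅⁅a, b⁆, x⁆` is a nonzero element of `A² ∩ ⟨x⟩`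
  killed by `y`;
* if `D(A) ⊆ A²` and `⁅x, y⁆ = 0` with `0 ≠ x ∈ A²`, then `y` centralizes `⟨x⟩` (the elements of
  `A²` centralized by `y` form an ideal, as `⁅y, a⁆ ∈ A²` acts trivially on `A²`), hence so does
  `⟨y⟩`; thus `y` is a zero divisor and lies in `A²`.
-/

section

variable {k : Type*} [CommRing k] {A : Type*} [LieRing A] [LieAlgebra k A]

theorem mem_lieIdealGen_self (x : A) : x ∈ lieIdealGen k x :=
  LieSubmodule.subset_lieSpan rfl

theorem lieIdealGen_le_iff {x : A} {I : LieIdeal k A} : lieIdealGen k x ≤ I ↔ x ∈ I := by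
  rw [lieIdealGen, LieSubmodule.lieSpan_le, Set.singleton_subset_iff, SetLike.mem_coe]

theorem lie_mem_commutant (a b : A) : ⁅a, b⁆ ∈ commutant k A :=
  LieSubmodule.lie_mem_lie (LieSubmodule.mem_top a) (LieSubmodule.mem_top b)

theorem commutant_eq_bot_iff : commutant k A = ⊥ ↔ ∀ x y : A, ⁅x, y⁆ = 0 := by
  simp [commutant, LieSubmodule.lie_eq_bot_iff]

theorem IsMetabelianLie.lie_eq_zero_of_mem_commutant (hA : IsMetabelianLie A) {u v : A}
    (hu : u ∈ commutant k A) (hv : v ∈ commutant k A) : ⁅u, v⁆ = 0 := by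
  rw [← LieSubmodule.mem_toSubmodule, commutant,
    LieSubmodule.lieIdeal_oper_eq_linear_span'] at hu hv
  induction hu using Submodule.span_induction with
  | mem u hu =>
    obtain ⟨a, -, b, -, rfl⟩ := hu
    induction hv using Submodule.span_induction with
    | mem v hv =>
      obtain ⟨c, -, d, -, rfl⟩ := hv
      exact hA a b c d
    | zero => exact lie_zero _
    | add v w _ _ hv hw => rw [lie_add, hv, hw, add_zero]
    | smul r v _ hv => rw [lie_smul, hv, smul_zero]
  | zero => exact zero_lie _
  | add u w _ _ hu hw => rw [add_lie, hu, hw, add_zero]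
  | smul r u _ hu => rw [smul_lie, hu, smul_zero]

theorem lie_eq_zero_of_forall_lie_lieIdealGen_eq_zero {x y : A}
    (h : ∀ b ∈ lieIdealGen k x, ⁅y, b⁆ = 0) :
    ∀ a ∈ lieIdealGen k y, ∀ b ∈ lieIdealGen k x, ⁅a, b⁆ = 0 := by
  -- The centralizer of the ideal `⟨x⟩` is an ideal: the kernel of the action of `A` on `⟨x⟩`.
  have hy : y ∈ LieModule.ker k A (lieIdealGen k x) := by
    rw [LieModule.mem_ker]
    exact fun b => Subtype.ext (h b b.2)
  intro a ha b hb
  have ha' := lieIdealGen_le_iff.2 hy ha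
  rw [LieModule.mem_ker] at ha'
  exact congrArg Subtype.val (ha' ⟨b, hb⟩)

theorem IsMetabelianLie.forall_lie_lieIdealGen_eq_zero (hA : IsMetabelianLie A) {x y : A}
    (hx : x ∈ commutant k A) (hxy : ⁅y, x⁆ = 0) : ∀ b ∈ lieIdealGen k x, ⁅y, b⁆ = 0 := by
  suffices ∀ b ∈ lieIdealGen k x, b ∈ commutant k A ∧ ⁅y, b⁆ = 0 from fun b hb => (this b hb).2
  intro b hb
  induction hb using LieSubmodule.lieSpan_induction with
  | mem b hb =>
    rw [Set.mem_singleton_iff.1 hb]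
    exact ⟨hx, hxy⟩
  | zero => exact ⟨zero_mem _, lie_zero _⟩
  | add b c _ _ hb hc => exact ⟨add_mem hb.1 hc.1, by rw [lie_add, hb.2, hc.2, add_zero]⟩
  | smul r b _ hb => exact ⟨SMulMemClass.smul_mem r hb.1, by rw [lie_smul, hb.2, smul_zero]⟩
  | lie a b _ hb =>
    refine ⟨(commutant k A).lie_mem hb.1, ?_⟩
    rw [leibniz_lie, hb.2, lie_zero, add_zero,
      hA.lie_eq_zero_of_mem_commutant (lie_mem_commutant y a) hb.1]

theorem IsMetabelianLie.commutant_subset_dSet (hA : IsMetabelianLie A) :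
    (commutant k A : Set A) ⊆ DSet k A := by
  intro x hx
  by_cases hx0 : x = 0
  · exact Or.inl hx0
  have hle : lieIdealGen k x ≤ commutant k A := lieIdealGen_le_iff.2 hx
  exact Or.inr ⟨x, hx0, hx0, fun u hu v hv =>
    hA.lie_eq_zero_of_mem_commutant (hle hu) (hle hv)⟩

theorem LTFree.dSet_subset_commutant (hLT : LTFree k A) {a b : A} (hab : ⁅a, b⁆ ≠ 0) :
    DSet k A ⊆ commutant k A := by
  rintro x (rfl | ⟨y, hx0, hy0, hpair⟩)
  · exact zero_mem _
  by_contra hx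
  have hxy : ⁅x, y⁆ = 0 := hpair x (mem_lieIdealGen_self x) y (mem_lieIdealGen_self y)
  by_cases hy : y ∈ commutant k A
  · exact hLT y hy hy0 x hx (by rw [← lie_skew, hxy, neg_zero])
  · have hc : ⁅⁅a, b⁆, x⁆ ∈ commutant k A := lie_mem_commutant _ _
    have hcx : ⁅⁅a, b⁆, x⁆ ∈ lieIdealGen k x :=
      (lieIdealGen k x).lie_mem (mem_lieIdealGen_self x)
    exact hLT _ hc (hLT _ (lie_mem_commutant a b) hab x hx) y hy
      (hpair _ hcx y (mem_lieIdealGen_self y))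

theorem ltFree_of_forall_lie_eq_zero (h : ∀ x y : A, ⁅x, y⁆ = 0) : LTFree k A := by
  intro x hx hx0
  rw [commutant_eq_bot_iff.2 h, LieSubmodule.mem_bot] at hx
  exact absurd hx hx0

theorem IsMetabelianLie.ltFree_of_dSet_subset (hA : IsMetabelianLie A)
    (hD : DSet k A ⊆ commutant k A) : LTFree k A := by
  intro x hx hx0 y hy hxy
  have hy0 : y ≠ 0 := fun h => hy (h ▸ zero_mem _)
  have hyx : ⁅y, x⁆ = 0 := by rw [← lie_skew, hxy, neg_zero]
  exact hy (hD (Or.inr ⟨x, hy0, hx0, lie_eq_zero_of_forall_lie_lieIdealGen_eq_zero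
    (hA.forall_lie_lieIdealGen_eq_zero hx hyx)⟩))

end

theorem ltfree_iff_abelian_or_strictSemidomain_general (k : Type*) [Field k] (A : Type*) [LieRing A]
    [LieAlgebra k A] (hA : IsMetabelianLie A) :
    LTFree k A ↔ (∀ x y : A, ⁅x, y⁆ = 0) ∨ DSet k A = (commutant k A : Set A) := by
  constructor
  · intro hLT
    refine or_iff_not_imp_left.2 fun hab => ?_
    obtain ⟨a, b, hab⟩ : ∃ a b : A, ⁅a, b⁆ ≠ 0 := by simpa using hab
    exact (hLT.dSet_subset_commutant hab).antisymm hA.commutant_subset_dSet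
  · rintro (hab | hD)
    · exact ltFree_of_forall_lie_eq_zero hab
    · exact hA.ltFree_of_dSet_subset hD.subset

/-- a nonzero metabelian Lie algebra has linear-torsion free commutant
iff it is abelian or a strict semidomain. -/
theorem ltfree_iff_abelian_or_strictSemidomain (k : Type*) [Field k] (A : Type*) [LieRing A]
    [LieAlgebra k A] [Nontrivial A] (hA : IsMetabelianLie A) :
    LTFree k A ↔ (∀ x y : A, ⁅x, y⁆ = 0) ∨ DSet k A = (commutant k A : Set A) :=
  ltfree_iff_abelian_or_strictSemidomain_general k A hA
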